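/- Let b ∈ (1/2, 3/2) and 0 ≤ X < 1. For ε ∈ (0,2) set a = 2−ε, C_k(ε) = 4^{−k}(a)_{2k}/((3/2)_k (b+1)_k) and F_k(ε) = ∑_{j≥0} (a+2k)_j (1/2)_j (b)_j / ((3/2+k)_j (b+1+k)_j j!) (a convergent series since its parametric excess is ε > 0). Then lim_{ε→0⁺} ε · ∑_{k≥0} C_k(ε) F_k(ε) (−X)^k = 2b/(4+X). -/

import Mathlib

/-- Pochhammer symbol (rising factorial) for a real argument. -/
noncomputable def poch (x : ℝ) (n : ℕ) : ℝ := (ascPochhammer ℝ n).eval x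

/-- The coefficients `C_k(ε) = 4^{−k}(a)_{2k}/((3/2)_k (b+1)_k)` with `a = 2−ε`. -/
noncomputable def coeffCeps (b ε : ℝ) (k : ℕ) : ℝ :=
  poch (2 - ε) (2 * k) / (4 ^ k * poch (3 / 2) k * poch (b + 1) k)

/-- The hypergeometric value `F_k(ε) = ₃F₂(2−ε+2k, 1/2, b; 3/2+k, b+1+k; 1)`. -/
noncomputable def seriesFeps (b ε : ℝ) (k : ℕ) : ℝ :=
  ∑' j : ℕ, poch (2 - ε + 2 * k) j * poch (1 / 2) j * poch b j /
    (poch (3 / 2 + (k : ℝ)) j * poch (b + 1 + (k : ℝ)) j * (Nat.factorial j : ℝ))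

/-!
Put `m = 2 + 2k` and `rⱼ(ε) = (m-ε)ⱼ / (m)ⱼ`, so that `F_k(ε) = ∑ⱼ tⱼ rⱼ(ε)` with `tⱼ` the
`ε = 0` term. The differences `wⱼ(ε) = rⱼ - rⱼ₊₁ = ε (m-ε)ⱼ / (m)ⱼ₊₁` are nonnegative, sum to
`1` because `rⱼ ~ c j^(-ε) → 0` (Euler's limit formula), and each tends to `0` with `ε`. Hence
`ε F_k(ε) = ∑ⱼ (m+j) tⱼ wⱼ(ε)` is an average of a sequence converging, again by Euler's formula,
to `Γ(3/2+k) Γ(b+1+k) / (Γ(2+2k) Γ(1/2) Γ(b))`, and so tends to it; multiplied by `C_k(0)` this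
is `(b/2) 4^(-k)`. For `b ≤ 3/2` the sequence `(j+1) tⱼ` decreases from `1`, which bounds
`ε C_k(ε) F_k(ε)` by `2 + 2k`, so dominated convergence for `∑ₖ` leaves the geometric series
`(b/2) ∑ₖ (-X/4)^k = 2b/(4+X)`.
-/

open Filter Finset Real Topology Nat

section Pochhammer

@[simp] lemma poch_zero (x : ℝ) : poch x 0 = 1 := by simp [poch]

lemma poch_succ (x : ℝ) (n : ℕ) : poch x (n + 1) = poch x n * (x + n) :=
  ascPochhammer_succ_eval n x

lemma poch_eq_prod_range (x : ℝ) (n : ℕ) : poch x n = ∏ i ∈ range n, (x + i) := by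
  induction n with
  | zero => simp
  | succ n ih => rw [poch_succ, ih, prod_range_succ]

lemma poch_pos {x : ℝ} (hx : 0 < x) (n : ℕ) : 0 < poch x n := ascPochhammer_pos n x hx

lemma poch_nonneg {x : ℝ} (hx : 0 ≤ x) (n : ℕ) : 0 ≤ poch x n := by
  induction n with
  | zero => simp
  | succ n ih => rw [poch_succ]; positivity

lemma poch_le_poch {x y : ℝ} (hx : 0 ≤ x) (hxy : x ≤ y) (n : ℕ) : poch x n ≤ poch y n := by
  induction n with
  | zero => simp
  | succ n ih =>
    rw [poch_succ, poch_succ]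
    exact mul_le_mul ih (by linarith) (by positivity) (poch_nonneg (hx.trans hxy) n)

lemma poch_one (n : ℕ) : poch 1 n = n ! := ascPochhammer_eval_one ℝ n

lemma poch_two_two_mul (k : ℕ) : poch 2 (2 * k) = 4 ^ k * poch (3 / 2) k * k ! := by
  induction k with
  | zero => simp
  | succ k ih =>
    rw [show 2 * (k + 1) = 2 * k + 1 + 1 by ring, poch_succ, poch_succ, ih, poch_succ,
      Nat.factorial_succ]
    push_cast
    ring

lemma Gamma_add_nat {x : ℝ} (hx : 0 < x) (n : ℕ) : Gamma (x + n) = poch x n * Gamma x := by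
  induction n with
  | zero => simp
  | succ n ih =>
    rw [Nat.cast_succ, ← add_assoc, Gamma_add_one (by positivity), ih, poch_succ]
    ring

noncomputable def pochScaled (x : ℝ) (n : ℕ) : ℝ := poch x n / ((n : ℝ) ^ (x - 1) * n !)

lemma tendsto_pochScaled {x : ℝ} (hx : Gamma x ≠ 0) :
    Tendsto (pochScaled x) atTop (𝓝 (Gamma x)⁻¹) := by
  have h := ((GammaSeq_tendsto_Gamma x).inv₀ hx).mul (tendsto_natCast_div_add_atTop x)
  rw [mul_one] at h
  refine h.congr' ?_
  filter_upwards [eventually_gt_atTop 0,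
    tendsto_natCast_atTop_atTop.eventually_gt_atTop (-x)] with n hn hxn
  have hn' : (0 : ℝ) < n := Nat.cast_pos.mpr hn
  rw [pochScaled, GammaSeq, prod_range_succ, ← poch_eq_prod_range, rpow_sub_one hn'.ne']
  have : (n : ℝ) + x ≠ 0 := by linarith
  field_simp
  ring

lemma tendsto_pochScaled_of_pos {x : ℝ} (hx : 0 < x) :
    Tendsto (pochScaled x) atTop (𝓝 (Gamma x)⁻¹) :=
  tendsto_pochScaled (Gamma_pos_of_pos hx).ne'

end Pochhammer

section PochWeight

variable {m ε : ℝ}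

noncomputable def pochWeight (m ε : ℝ) (j : ℕ) : ℝ := ε * poch (m - ε) j / poch m (j + 1)

lemma pochWeight_nonneg (hε : 0 ≤ ε) (hεm : ε ≤ m) (j : ℕ) : 0 ≤ pochWeight m ε j := by
  have := poch_nonneg (sub_nonneg.mpr hεm) j
  have := poch_nonneg (hε.trans hεm) (j + 1)
  unfold pochWeight
  positivity

lemma pochWeight_eq_sub (hm : 0 < m) (j : ℕ) :
    pochWeight m ε j = poch (m - ε) j / poch m j - poch (m - ε) (j + 1) / poch m (j + 1) := by
  have := poch_pos hm j
  have : 0 < m + j := by positivity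
  rw [pochWeight, poch_succ m, poch_succ (m - ε)]
  field_simp
  ring

lemma tendsto_poch_sub_div_poch (hε : 0 < ε) (hεm : ε < m) :
    Tendsto (fun j : ℕ => poch (m - ε) j / poch m j) atTop (𝓝 0) := by
  have hΓ := (tendsto_pochScaled_of_pos (sub_pos.mpr hεm)).div
    (tendsto_pochScaled_of_pos (hε.trans hεm)) (inv_ne_zero (Gamma_pos_of_pos (hε.trans hεm)).ne')
  have h := hΓ.mul ((tendsto_rpow_neg_atTop hε).comp tendsto_natCast_atTop_atTop)
  rw [mul_zero] at h
  refine h.congr' ?_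
  filter_upwards [eventually_gt_atTop 0] with j hj
  have hj' : (0 : ℝ) < j := Nat.cast_pos.mpr hj
  have := poch_pos (hε.trans hεm) j
  have := rpow_pos_of_pos hj' ε
  have := rpow_pos_of_pos hj' (m - ε - 1)
  simp only [Pi.div_apply, Function.comp_apply, pochScaled]
  rw [show m - 1 = m - ε - 1 + ε by ring, rpow_add hj', rpow_neg hj'.le]
  field_simp

lemma hasSum_pochWeight (hε : 0 < ε) (hεm : ε < m) : HasSum (pochWeight m ε) 1 := by
  rw [hasSum_iff_tendsto_nat_of_nonneg (pochWeight_nonneg hε.le hεm.le)]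
  have hm : 0 < m := hε.trans hεm
  have h := (tendsto_poch_sub_div_poch hε hεm).const_sub 1
  rw [sub_zero] at h
  refine h.congr fun N => ?_
  rw [sum_congr rfl fun j _ => pochWeight_eq_sub hm j, sum_range_sub']
  simp

lemma tendsto_pochWeight_zero (m : ℝ) (j : ℕ) :
    Tendsto (fun ε => pochWeight m ε j) (𝓝 0) (𝓝 0) := by
  have hc : Continuous (fun ε => pochWeight m ε j) := by
    unfold pochWeight poch
    fun_prop
  simpa [pochWeight] using hc.tendsto 0

end PochWeight

lemma abs_tsum_mul_sub_le {w h : ℕ → ℝ} {A M η : ℝ} {J : ℕ} (hw0 : ∀ j, 0 ≤ w j)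
    (hw : HasSum w 1) (hM : ∀ j, |h j - A| ≤ M) (hJ : ∀ j ≥ J, |h j - A| ≤ η) :
    |∑' j, h j * w j - A| ≤ M * ∑ j ∈ range J, w j + η := by
  set f : ℕ → ℝ := fun j => |(h j - A) * w j|
  have hf : ∀ j, f j = |h j - A| * w j := fun j => by
    simp only [f, abs_mul, abs_of_nonneg (hw0 j)]
  have hfM : ∀ j, f j ≤ M * w j := fun j => (hf j).trans_le (by gcongr; exacts [hw0 j, hM j])
  have hfs : Summable f := (hw.summable.mul_left M).of_nonneg_of_le (fun j => abs_nonneg _) hfM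
  have hsum : ∑' j, h j * w j - A = ∑' j, (h j - A) * w j := by
    have hAw := hw.summable.mul_left A
    have hhw : Summable fun j => h j * w j := (hfs.of_abs.add hAw).congr fun j => by ring
    simp_rw [sub_mul]
    rw [hhw.tsum_sub hAw, tsum_mul_left, hw.tsum_eq, mul_one]
  have hhead : ∑ j ∈ range J, f j ≤ M * ∑ j ∈ range J, w j := by
    rw [mul_sum]
    exact sum_le_sum fun j _ => hfM j
  have htail : ∑' j, f (j + J) ≤ η := by
    have hwJ := (summable_nat_add_iff J).mpr hw.summable
    have hη : 0 ≤ η := (abs_nonneg _).trans (hJ J le_rfl)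
    have hwJ1 : ∑' j, w (j + J) ≤ 1 := by
      rw [← hw.tsum_eq, ← hw.summable.sum_add_tsum_nat_add J]
      linarith [sum_nonneg fun j (_ : j ∈ range J) => hw0 j]
    calc ∑' j, f (j + J) ≤ ∑' j, η * w (j + J) :=
          ((summable_nat_add_iff J).mpr hfs).tsum_le_tsum
            (fun j => (hf _).trans_le (by gcongr; exacts [hw0 _, hJ _ le_add_self]))
            (hwJ.mul_left η)
      _ ≤ η := by rw [tsum_mul_left]; nlinarith
  calc |∑' j, h j * w j - A| ≤ ∑' j, f j := by
        rw [hsum, ← Real.norm_eq_abs]; exact norm_tsum_le_tsum_norm hfs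
    _ = ∑ j ∈ range J, f j + ∑' j, f (j + J) := (hfs.sum_add_tsum_nat_add J).symm
    _ ≤ M * ∑ j ∈ range J, w j + η := add_le_add hhead htail

lemma tendsto_tsum_mul_of_hasSum_one {α : Type*} {l : Filter α} {w : α → ℕ → ℝ} {h : ℕ → ℝ}
    {A : ℝ} (hw : ∀ᶠ x in l, (∀ j, 0 ≤ w x j) ∧ HasSum (w x) 1)
    (hw0 : ∀ j, Tendsto (fun x => w x j) l (𝓝 0)) (hh : Tendsto h atTop (𝓝 A)) :
    Tendsto (fun x => ∑' j, h j * w x j) l (𝓝 A) := by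
  obtain ⟨M, hM⟩ : ∃ M, ∀ j, |h j - A| ≤ M :=
    (isBounded_iff_forall_norm_le.mp (Metric.isBounded_range_of_tendsto _ (hh.sub_const A))).imp
      fun M hM j => hM _ ⟨j, rfl⟩
  have hM0 : 0 ≤ M := (abs_nonneg _).trans (hM 0)
  rw [Metric.tendsto_nhds]
  intro δ hδ
  obtain ⟨J, hJ⟩ := Metric.tendsto_atTop.mp hh (δ / 2) (half_pos hδ)
  have hhead : Tendsto (fun x => ∑ j ∈ range J, w x j) l (𝓝 0) := by
    simpa using tendsto_finsetSum (range J) fun j _ => hw0 j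
  filter_upwards [hw, hhead.eventually (gt_mem_nhds (show 0 < δ / (2 * (M + 1)) by positivity))]
    with x ⟨hw0x, hw1x⟩ hsmall
  have hest := abs_tsum_mul_sub_le hw0x hw1x hM fun j hj => (hJ j hj).le
  have : M * (δ / (2 * (M + 1))) < δ / 2 := by
    rw [mul_div_assoc', div_lt_div_iff₀ (by positivity) two_pos]
    nlinarith
  rw [dist_eq_norm, Real.norm_eq_abs]
  nlinarith [mul_le_mul_of_nonneg_left hsmall.le hM0]

section HypTerm

variable {b : ℝ}

noncomputable def seriesFResidue (b : ℝ) (k : ℕ) : ℝ :=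
  Gamma (3 / 2 + k) * Gamma (b + 1 + k) / (Gamma (2 + 2 * k) * Gamma (1 / 2) * Gamma b)

noncomputable def hypTerm (b : ℝ) (k j : ℕ) : ℝ :=
  poch (2 + 2 * k) j * poch (1 / 2) j * poch b j /
    (poch (3 / 2 + k) j * poch (b + 1 + k) j * j !)

lemma hypTerm_zero_right (b : ℝ) (k : ℕ) : hypTerm b k 0 = 1 := by simp [hypTerm]

lemma hypTerm_nonneg (hb : 0 ≤ b) (k j : ℕ) : 0 ≤ hypTerm b k j := by
  have := poch_nonneg hb j
  have := poch_pos (show (0 : ℝ) < 2 + 2 * k by positivity) j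
  have := poch_pos (show (0 : ℝ) < 1 / 2 by norm_num) j
  have := poch_pos (show (0 : ℝ) < 3 / 2 + k by positivity) j
  have := poch_pos (show (0 : ℝ) < b + 1 + k by positivity) j
  unfold hypTerm
  positivity

lemma hypTerm_succ (hb : 0 ≤ b) (k j : ℕ) :
    hypTerm b k (j + 1) = hypTerm b k j * ((2 + 2 * k + j) * (1 / 2 + j) * (b + j)) /
      ((3 / 2 + k + j) * (b + 1 + k + j) * (j + 1)) := by
  have := poch_pos (show (0 : ℝ) < 3 / 2 + k by positivity) j
  have := poch_pos (show (0 : ℝ) < b + 1 + k by positivity) j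
  have : (0 : ℝ) < 3 / 2 + k + j := by positivity
  have : (0 : ℝ) < b + 1 + k + j := by positivity
  simp only [hypTerm, poch_succ, Nat.factorial_succ]
  push_cast
  field_simp

lemma add_one_mul_hypTerm_succ_le (hb0 : 0 ≤ b) (hb : b ≤ 3 / 2) (k j : ℕ) :
    ((j + 1 : ℕ) + 1 : ℝ) * hypTerm b k (j + 1) ≤ (j + 1) * hypTerm b k j := by
  have hpoly : ((j : ℝ) + 2) * ((2 + 2 * k + j) * (1 / 2 + j) * (b + j)) ≤
      ((3 / 2 + k + j) * (b + 1 + k + j) * (j + 1)) * (j + 1) := by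
    obtain ⟨s, hs, rfl⟩ : ∃ s, 0 ≤ s ∧ b = 3 / 2 - s := ⟨3 / 2 - b, by linarith, by ring⟩
    rw [← sub_nonneg]
    convert_to (0 : ℝ) ≤ j ^ 2 * (k ^ 2 + (k + 1) * s) +
      j * (2 * k ^ 2 + k * (3 * s + 1 / 2) + 2 * s + 1 / 2) + (k ^ 2 + k * (s + 1) + 3 / 4 + s / 2)
    · ring
    positivity
  have hD : (0 : ℝ) < (3 / 2 + k + j) * (b + 1 + k + j) * (j + 1) := by positivity
  rw [hypTerm_succ hb0, mul_div_assoc', div_le_iff₀ hD]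
  push_cast
  nlinarith [hypTerm_nonneg hb0 k j]

lemma add_one_mul_hypTerm_le_one (hb0 : 0 ≤ b) (hb : b ≤ 3 / 2) (k j : ℕ) :
    (j + 1) * hypTerm b k j ≤ 1 := by
  induction j with
  | zero => simp [hypTerm_zero_right]
  | succ j ih => exact (add_one_mul_hypTerm_succ_le hb0 hb k j).trans ih

lemma natCast_mul_hypTerm (hb : 0 ≤ b) (k : ℕ) {j : ℕ} (hj : 0 < j) :
    j * hypTerm b k j = pochScaled (2 + 2 * k) j * pochScaled (1 / 2) j * pochScaled b j /
      (pochScaled (3 / 2 + k) j * pochScaled (b + 1 + k) j) := by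
  have hj' : (0 : ℝ) < j := Nat.cast_pos.mpr hj
  have hrpow : (j : ℝ) ^ (3 / 2 + (k : ℝ) - 1) = j * ((j : ℝ) ^ (2 + 2 * (k : ℝ) - 1) *
      (j : ℝ) ^ ((1 : ℝ) / 2 - 1) * (j : ℝ) ^ (b - 1)) / (j : ℝ) ^ (b + 1 + k - 1) := by
    rw [eq_div_iff (rpow_pos_of_pos hj' _).ne']
    nth_rewrite 3 [← rpow_one (j : ℝ)]
    rw [← rpow_add hj', ← rpow_add hj', ← rpow_add hj', ← rpow_add hj']
    ring_nf
  have := poch_pos (show (0 : ℝ) < 3 / 2 + k by positivity) j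
  have := poch_pos (show (0 : ℝ) < b + 1 + k by positivity) j
  have := rpow_pos_of_pos hj' (2 + 2 * (k : ℝ) - 1)
  have := rpow_pos_of_pos hj' ((1 : ℝ) / 2 - 1)
  have := rpow_pos_of_pos hj' (b - 1)
  have := rpow_pos_of_pos hj' (b + 1 + (k : ℝ) - 1)
  simp only [pochScaled, hypTerm]
  rw [hrpow]
  field_simp

lemma tendsto_natCast_mul_hypTerm (hb : 0 < b) (k : ℕ) :
    Tendsto (fun j : ℕ => j * hypTerm b k j) atTop (𝓝 (seriesFResidue b k)) := by
  have hlim := (((tendsto_pochScaled_of_pos (show (0 : ℝ) < 2 + 2 * k by positivity)).mul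
    (tendsto_pochScaled_of_pos (show (0 : ℝ) < 1 / 2 by norm_num))).mul
    (tendsto_pochScaled_of_pos hb)).div
    ((tendsto_pochScaled_of_pos (show (0 : ℝ) < 3 / 2 + k by positivity)).mul
      (tendsto_pochScaled_of_pos (show (0 : ℝ) < b + 1 + k by positivity)))
    (mul_ne_zero (inv_ne_zero (Gamma_pos_of_pos (by positivity)).ne')
      (inv_ne_zero (Gamma_pos_of_pos (by positivity)).ne'))
  convert hlim.congr' ?_ using 2
  · rw [seriesFResidue]
    field_simp
  filter_upwards [eventually_gt_atTop 0] with j hj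
  exact (natCast_mul_hypTerm hb.le k hj).symm

end HypTerm

section SeriesFeps

variable {b : ℝ}

lemma mul_seriesFeps_eq_tsum (b ε : ℝ) (k : ℕ) : ε * seriesFeps b ε k =
    ∑' j : ℕ, (2 + 2 * k + j) * hypTerm b k j * pochWeight (2 + 2 * k) ε j := by
  rw [seriesFeps, ← tsum_mul_left]
  congr 1
  ext j
  have hpoch := poch_pos (show (0 : ℝ) < 2 + 2 * k by positivity) j
  have : (0 : ℝ) < 2 + 2 * k + j := by positivity
  rw [hypTerm, pochWeight, poch_succ, show 2 - ε + 2 * (k : ℝ) = 2 + 2 * k - ε by ring]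
  generalize 2 + 2 * (k : ℝ) = m at *
  field_simp

lemma tendsto_mul_seriesFeps (hb : 0 < b) (k : ℕ) :
    Tendsto (fun ε => ε * seriesFeps b ε k) (𝓝[>] 0) (𝓝 (seriesFResidue b k)) := by
  simp_rw [mul_seriesFeps_eq_tsum]
  have hm : (0 : ℝ) < 2 + 2 * k := by positivity
  refine tendsto_tsum_mul_of_hasSum_one ?_
    (fun j => (tendsto_pochWeight_zero _ j).mono_left nhdsWithin_le_nhds) ?_
  · filter_upwards [Ioo_mem_nhdsGT hm] with ε hε
    exact ⟨pochWeight_nonneg hε.1.le hε.2.le, hasSum_pochWeight hε.1 hε.2⟩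
  · have h := (tendsto_natCast_mul_hypTerm hb k).mul
      ((tendsto_const_div_atTop_nhds_zero_nat (2 + 2 * (k : ℝ))).const_add 1)
    rw [add_zero, mul_one] at h
    refine h.congr' ?_
    filter_upwards [eventually_gt_atTop 0] with j hj
    have : (j : ℝ) ≠ 0 := Nat.cast_ne_zero.mpr hj.ne'
    field_simp
    ring

lemma abs_mul_seriesFeps_le (hb0 : 0 ≤ b) (hb : b ≤ 3 / 2) {ε : ℝ} (hε : 0 < ε) (hε2 : ε < 2)
    (k : ℕ) : |ε * seriesFeps b ε k| ≤ 2 + 2 * k := by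
  have hm : ε < 2 + 2 * k := by linarith [k.cast_nonneg (α := ℝ)]
  have hw := hasSum_pochWeight hε hm
  have hw0 := pochWeight_nonneg hε.le hm.le
  have hh : ∀ j : ℕ, 0 ≤ (2 + 2 * k + j) * hypTerm b k j ∧
      (2 + 2 * k + j) * hypTerm b k j ≤ 2 + 2 * k := fun j => by
    have hg := hypTerm_nonneg hb0 k j
    refine ⟨by positivity, ?_⟩
    nlinarith [add_one_mul_hypTerm_le_one hb0 hb k j,
      mul_nonneg (mul_nonneg (by positivity : (0 : ℝ) ≤ 1 + 2 * k) j.cast_nonneg) hg]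
  have hbound : ∀ j, (2 + 2 * k + j) * hypTerm b k j * pochWeight (2 + 2 * k) ε j ≤
      (2 + 2 * k) * pochWeight (2 + 2 * k) ε j := fun j =>
    mul_le_mul_of_nonneg_right (hh j).2 (hw0 j)
  rw [mul_seriesFeps_eq_tsum, abs_of_nonneg (tsum_nonneg fun j => mul_nonneg (hh j).1 (hw0 j))]
  calc _ ≤ ∑' j, (2 + 2 * k) * pochWeight (2 + 2 * k) ε j :=
        ((hw.summable.mul_left _).of_nonneg_of_le (fun j => mul_nonneg (hh j).1 (hw0 j))
          hbound).tsum_le_tsum hbound (hw.summable.mul_left _)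
    _ = 2 + 2 * k := by rw [tsum_mul_left, hw.tsum_eq, mul_one]

end SeriesFeps

section CoeffCeps

variable {b : ℝ}

lemma coeffCeps_nonneg (hb : 0 ≤ b) {ε : ℝ} (hε : ε ≤ 2) (k : ℕ) : 0 ≤ coeffCeps b ε k := by
  have := poch_nonneg (sub_nonneg.mpr hε) (2 * k)
  have := poch_pos (show (0 : ℝ) < 3 / 2 by norm_num) k
  have := poch_pos (show (0 : ℝ) < b + 1 by positivity) k
  unfold coeffCeps
  positivity

lemma coeffCeps_le_one (hb : 0 ≤ b) {ε : ℝ} (hε0 : 0 ≤ ε) (hε : ε ≤ 2) (k : ℕ) :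
    coeffCeps b ε k ≤ 1 := by
  have := poch_pos (show (0 : ℝ) < 3 / 2 by norm_num) k
  rw [coeffCeps, div_le_one (by positivity [poch_pos (show (0 : ℝ) < b + 1 by positivity) k])]
  calc poch (2 - ε) (2 * k) ≤ poch 2 (2 * k) := poch_le_poch (by linarith) (by linarith) _
    _ = 4 ^ k * poch (3 / 2) k * poch 1 k := by rw [poch_two_two_mul, poch_one]
    _ ≤ 4 ^ k * poch (3 / 2) k * poch (b + 1) k := by
      gcongr
      exact poch_le_poch zero_le_one (by linarith) k

lemma continuous_coeffCeps (b : ℝ) (k : ℕ) : Continuous fun ε => coeffCeps b ε k := by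
  unfold coeffCeps poch
  fun_prop

lemma coeffCeps_zero_mul_seriesFResidue (hb : 0 < b) (k : ℕ) :
    coeffCeps b 0 k * seriesFResidue b k = b / 2 * (1 / 4) ^ k := by
  have hpoch := poch_pos (show (0 : ℝ) < 2 by norm_num) (2 * k)
  have := poch_pos (show (0 : ℝ) < 3 / 2 by norm_num) k
  have := poch_pos (show (0 : ℝ) < b + 1 by positivity) k
  have := Gamma_pos_of_pos (show (0 : ℝ) < 1 / 2 by norm_num)
  have := Gamma_pos_of_pos hb
  have h2 : Gamma (2 + 2 * k) = poch 2 (2 * k) := by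
    rw [show (2 : ℝ) + 2 * k = 2 + (2 * k : ℕ) by push_cast; ring, Gamma_add_nat two_pos,
      Gamma_two, mul_one]
  have h32 : Gamma (3 / 2) = Gamma (1 / 2) / 2 := by
    rw [show (3 / 2 : ℝ) = 1 / 2 + 1 by norm_num, Gamma_add_one (by norm_num)]
    ring
  rw [coeffCeps, seriesFResidue, sub_zero, Gamma_add_nat (by norm_num),
    Gamma_add_nat (by positivity), Gamma_add_one hb.ne', h2, h32]
  field_simp
  rw [← mul_pow]
  norm_num

end CoeffCeps

lemma tendsto_mul_term {b : ℝ} (hb : 0 < b) (X : ℝ) (k : ℕ) :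
    Tendsto (fun ε => ε * (coeffCeps b ε k * seriesFeps b ε k * (-X) ^ k)) (𝓝[>] 0)
      (𝓝 (b / 2 * (-X / 4) ^ k)) := by
  have h := ((((continuous_coeffCeps b k).tendsto 0).mono_left nhdsWithin_le_nhds).mul
    (tendsto_mul_seriesFeps hb k)).mul_const ((-X) ^ k)
  rw [coeffCeps_zero_mul_seriesFResidue hb, mul_assoc, ← mul_pow, one_div_mul_eq_div] at h
  exact h.congr fun ε => by ring

lemma norm_mul_term_le {b X ε : ℝ} (hb0 : 0 ≤ b) (hb : b ≤ 3 / 2) (hX : 0 ≤ X) (hε : 0 < ε)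
    (hε2 : ε < 2) (k : ℕ) :
    ‖ε * (coeffCeps b ε k * seriesFeps b ε k * (-X) ^ k)‖ ≤ (2 + 2 * k) * X ^ k := by
  have hC0 := coeffCeps_nonneg hb0 hε2.le k
  have hC1 := coeffCeps_le_one hb0 hε.le hε2.le k
  have hF := abs_mul_seriesFeps_le hb0 hb hε hε2 k
  rw [Real.norm_eq_abs, show ε * (coeffCeps b ε k * seriesFeps b ε k * (-X) ^ k) =
    coeffCeps b ε k * (ε * seriesFeps b ε k) * (-X) ^ k by ring, abs_mul, abs_mul, abs_pow,
    abs_neg, abs_of_nonneg hX, abs_of_nonneg hC0]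
  gcongr
  nlinarith [abs_nonneg (ε * seriesFeps b ε k)]

theorem stmt_18 (b X : ℝ) (hb1 : 1 / 2 < b) (hb2 : b < 3 / 2)
    (hX0 : 0 ≤ X) (hX1 : X < 1) :
    Filter.Tendsto
      (fun ε : ℝ => ε * ∑' k : ℕ, coeffCeps b ε k * seriesFeps b ε k * (-X) ^ k)
      (nhdsWithin 0 (Set.Ioi 0)) (nhds (2 * b / (4 + X))) := by
  have hb0 : 0 < b := by linarith
  have hX : ‖X‖ < 1 := by rwa [Real.norm_eq_abs, abs_of_nonneg hX0]
  have hbound : Summable fun k : ℕ => (2 + 2 * k) * X ^ k := by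
    simpa [add_mul, mul_assoc] using ((summable_geometric_of_norm_lt_one hX).mul_left 2).add
      ((summable_pow_mul_geometric_of_norm_lt_one 1 hX).mul_left 2)
  have hlim : ∑' k : ℕ, b / 2 * (-X / 4) ^ k = 2 * b / (4 + X) := by
    have hX4 : ‖-X / 4‖ < 1 := by
      rw [norm_div, norm_neg, Real.norm_eq_abs, abs_of_nonneg hX0]
      norm_num
      linarith
    have : 4 + X ≠ 0 := by linarith
    rw [tsum_mul_left, tsum_geometric_of_norm_lt_one hX4, show 1 - -X / 4 = (4 + X) / 4 by ring]
    field_simp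
    norm_num
  rw [← hlim]
  refine (tendsto_tsum_of_dominated_convergence hbound (tendsto_mul_term hb0 X) ?_).congr
    fun ε => tsum_mul_left
  filter_upwards [Ioo_mem_nhdsGT two_pos] with ε hε
  exact norm_mul_term_le hb0.le hb2.le hX0 hε.1 hε.2
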